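/- Pairing holds for well-founded extensional apgs: for any two well-founded extensional apgs X and Y (on types in a fixed universe) there exists a well-founded extensional apg Z (on a type in the same universe) such that for every well-founded extensional apg W, W ⋿ Z if and only if W is isomorphic as a pointed graph to X or to Y. -/

import Mathlib

universe u v

/-- A relation is (inductively) well-founded if every inductive subset is the whole type:
`S` is inductive when `x ∈ S` whenever every child of `x` is in `S`. -/
def IsWFRel {X : Type u} (r : X → X → Prop) : Prop :=
  ∀ S : Set X, (∀ x, (∀ y, r y x → y ∈ S) → x ∈ S) → S = Set.univ

/-- A relation is extensional if nodes with the same children are equal. -/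
def IsExtRel {X : Type u} (r : X → X → Prop) : Prop :=
  ∀ x y, (∀ z, r z x ↔ r z y) → x = y

/-- `Below r x` is the full subgraph `X/x` of nodes admitting a (possibly empty) path to `x`. -/
def Below {X : Type u} (r : X → X → Prop) (x : X) : Type u :=
  {z : X // Relation.ReflTransGen r z x}

/-- The induced relation on the subgraph `X/x`. -/
def belowRel {X : Type u} (r : X → X → Prop) (x : X) :
    Below r x → Below r x → Prop :=
  fun a b => r a.1 b.1

/-- The root of the pointed subgraph `X/x`. -/
def belowRoot {X : Type u} (r : X → X → Prop) (x : X) : Below r x :=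
  ⟨x, Relation.ReflTransGen.refl⟩

/-- Isomorphism of pointed graphs: a relation-preserving-and-reflecting bijection
taking the first distinguished point to the second. -/
def PIso {X : Type u} {Y : Type v} (rX : X → X → Prop) (rY : Y → Y → Prop)
    (x : X) (y : Y) : Prop :=
  ∃ f : X ≃ Y, (∀ a b, rX a b ↔ rY (f a) (f b)) ∧ f x = y

/-- A simulation of graphs. -/
def IsSimulation {X : Type u} {Y : Type v} (rX : X → X → Prop)
    (rY : Y → Y → Prop) (f : X → Y) : Prop :=
  (∀ a b, rX a b → rY (f a) (f b)) ∧
  (∀ x y, rY y (f x) → ∃ a, rX a x ∧ f a = y)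

/-- A bisimulation between graphs. -/
def IsBisimulation {X : Type u} {Y : Type v} (rX : X → X → Prop)
    (rY : Y → Y → Prop) (R : X → Y → Prop) : Prop :=
  ∀ x y, R x y →
    (∀ x', rX x' x → ∃ y', rY y' y ∧ R x' y') ∧
    (∀ y', rY y' y → ∃ x', rX x' x ∧ R x' y')

/-- A bi-entire relation. -/
def BiEntire {X : Type u} {Y : Type v} (R : X → Y → Prop) : Prop :=
  (∀ x, ∃ y, R x y) ∧ (∀ y, ∃ x, R x y)

/-- A well-founded extensional accessible pointed graph ("apg") on a type in universe `u`. -/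
structure WEApg : Type (u + 1) where
  carrier : Type u
  rel : carrier → carrier → Prop
  root : carrier
  acc : ∀ x, Relation.ReflTransGen rel x root
  wf : IsWFRel rel
  ext : IsExtRel rel

/-- Isomorphism of (the underlying pointed graphs of) apgs. -/
def WEApg.Iso (X Y : WEApg.{u}) : Prop :=
  PIso X.rel Y.rel X.root Y.root

/-- Membership of the pointed graph `(W, rW, w)` in the pointed graph `(Y, rY, y)`:
`(W, rW, w)` is isomorphic as a pointed graph to `(Y, rY)/z` for some child `z` of `y`. -/
def MemPGAt {W : Type u} {Y : Type v} (rW : W → W → Prop) (w : W)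
    (rY : Y → Y → Prop) (y : Y) : Prop :=
  ∃ z, rY z y ∧ PIso rW (belowRel rY z) w (belowRoot rY z)

/-- `X ⋿ Y` for apgs: `X` is isomorphic as a pointed graph to `Y/y` for some member
(child of the root) `y` of `Y`. -/
def WEApg.Mem (X Y : WEApg.{u}) : Prop :=
  MemPGAt X.rel X.root Y.rel Y.root

/-!
The Mostowski collapse sends a node of a well-founded graph to the set of the collapses of its
children. For well-founded extensional graphs it is injective, so a well-founded extensional apg
is determined up to isomorphism by the collapse of its root, and `W ⋿ Z` becomes membership of
collapses. Quotienting any well-founded accessible pointed graph by the kernel of its collapse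
gives a well-founded extensional apg with the same collapse; applied to `X ⊔ Y` with a new root
above both roots it yields an apg with collapse `{collapse X, collapse Y}`.
-/

open Relation

variable {α β : Type u} {r : α → α → Prop} {s : β → β → Prop}

theorem isWFRel_iff_wellFounded : IsWFRel r ↔ WellFounded r := by
  constructor
  · intro h
    refine ⟨fun a => ?_⟩
    have hacc : {a | Acc r a} = Set.univ := h _ fun a ha => Acc.intro a ha
    exact Set.eq_univ_iff_forall.1 hacc a
  · intro hr S hS
    exact Set.eq_univ_of_forall fun a => hr.induction a hS

namespace WellFounded

noncomputable def collapse (hr : WellFounded r) : α → ZFSet.{u} :=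
  hr.fix fun a IH => ZFSet.range fun b : {b // r b a} => IH b.1 b.2

theorem mem_collapse (hr : WellFounded r) {a : α} {t : ZFSet.{u}} :
    t ∈ hr.collapse a ↔ ∃ b, r b a ∧ hr.collapse b = t := by
  rw [collapse, hr.fix_eq, ZFSet.mem_range, Subtype.exists]
  simp only [exists_prop]

theorem collapse_mem_collapse (hr : WellFounded r) {a b : α} (h : r a b) :
    hr.collapse a ∈ hr.collapse b :=
  hr.mem_collapse.2 ⟨a, h, rfl⟩

theorem collapse_eq_of_mem_iff (hr : WellFounded r) {g : α → ZFSet.{u}}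
    (hg : ∀ a t, t ∈ g a ↔ ∃ b, r b a ∧ g b = t) : hr.collapse = g := by
  funext a
  induction a using hr.induction with
  | _ a IH =>
    refine ZFSet.ext fun t => ?_
    rw [mem_collapse, hg]
    exact exists_congr fun b => and_congr_right fun hb => by rw [IH b hb]

theorem collapse_comp_of_isSimulation (hr : WellFounded r) (hs : WellFounded s) {f : α → β}
    (hf : IsSimulation r s f) : hs.collapse ∘ f = hr.collapse := by
  refine (hr.collapse_eq_of_mem_iff fun a t => ?_).symm
  rw [Function.comp_apply, hs.mem_collapse]
  constructor
  · rintro ⟨y, hy, rfl⟩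
    obtain ⟨b, hb, rfl⟩ := hf.2 a y hy
    exact ⟨b, hb, rfl⟩
  · rintro ⟨b, hb, rfl⟩
    exact ⟨f b, hf.1 b a hb, rfl⟩

theorem injective_collapse_iff (hr : WellFounded r) :
    Function.Injective hr.collapse ↔ IsExtRel r := by
  constructor
  · intro hinj a b hab
    refine hinj (ZFSet.ext fun t => ?_)
    simp only [mem_collapse, hab]
  · intro hext a
    induction a using hr.induction with
    | _ a IH =>
      intro b hab
      refine hext a b fun c => ⟨fun hc => ?_, fun hc => ?_⟩
      · obtain ⟨c', hc', hcc'⟩ := hr.mem_collapse.1 (hab ▸ hr.collapse_mem_collapse hc)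
        rwa [IH c hc hcc'.symm]
      · obtain ⟨c', hc', hcc'⟩ := hr.mem_collapse.1 (hab.symm ▸ hr.collapse_mem_collapse hc)
        rwa [← IH c' hc' hcc']

theorem collapse_mem_collapse_iff (hr : WellFounded r) (hext : IsExtRel r) {a b : α} :
    hr.collapse a ∈ hr.collapse b ↔ r a b := by
  refine ⟨fun h => ?_, hr.collapse_mem_collapse⟩
  obtain ⟨c, hc, hca⟩ := hr.mem_collapse.1 h
  rwa [← (hr.injective_collapse_iff.2 hext) hca]

theorem range_collapse (hr : WellFounded r) {x : α} (hx : ∀ a, ReflTransGen r a x) :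
    Set.range hr.collapse = {t | ReflTransGen (· ∈ ·) t (hr.collapse x)} := by
  ext t
  constructor
  · rintro ⟨a, rfl⟩
    exact (hx a).lift (p := (· ∈ ·)) hr.collapse fun _ _ => hr.collapse_mem_collapse
  · intro ht
    induction ht using ReflTransGen.head_induction_on with
    | refl => exact ⟨x, rfl⟩
    | head ht _ ih =>
      obtain ⟨a, rfl⟩ := ih
      obtain ⟨b, -, rfl⟩ := hr.mem_collapse.1 ht
      exact ⟨b, rfl⟩

end WellFounded

theorem pIso_iff_collapse_eq (hr : WellFounded r) (hs : WellFounded s)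
    (hrext : IsExtRel r) (hsext : IsExtRel s) {x : α} {y : β}
    (hx : ∀ a, ReflTransGen r a x) (hy : ∀ b, ReflTransGen s b y) :
    PIso r s x y ↔ hr.collapse x = hs.collapse y := by
  constructor
  · rintro ⟨f, hf, rfl⟩
    have hsim : IsSimulation r s f :=
      ⟨fun a b => (hf a b).1, fun a b hb =>
        ⟨f.symm b, (hf _ a).2 (by rwa [Equiv.apply_symm_apply]), f.apply_symm_apply b⟩⟩
    exact (congrFun (hr.collapse_comp_of_isSimulation hs hsim) x).symm
  · intro hxy
    have hinjr := hr.injective_collapse_iff.2 hrext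
    have hinjs := hs.injective_collapse_iff.2 hsext
    have hrange : Set.range hr.collapse = Set.range hs.collapse := by
      rw [hr.range_collapse hx, hs.range_collapse hy, hxy]
    let e : α ≃ β := (Equiv.ofInjective _ hinjr).trans
      ((Equiv.setCongr hrange).trans (Equiv.ofInjective _ hinjs).symm)
    have he : ∀ a, hs.collapse (e a) = hr.collapse a := fun a =>
      Equiv.apply_ofInjective_symm hinjs _
    refine ⟨e, fun a b => ?_, hinjs (by rw [he, hxy])⟩
    rw [← hr.collapse_mem_collapse_iff hrext, ← hs.collapse_mem_collapse_iff hsext, he, he]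

section Below

theorem wellFounded_belowRel (hr : WellFounded r) (x : α) : WellFounded (belowRel r x) :=
  InvImage.wf Subtype.val hr

theorem isSimulation_below_val (x : α) : IsSimulation (belowRel r x) r Subtype.val :=
  ⟨fun _ _ h => h, fun a b h => ⟨⟨b, ReflTransGen.head h a.2⟩, h, rfl⟩⟩

theorem isExtRel_belowRel (hext : IsExtRel r) (x : α) : IsExtRel (belowRel r x) := fun a b h =>
  Subtype.ext <| hext _ _ fun c =>
    ⟨fun hc => (h ⟨c, ReflTransGen.head hc a.2⟩).1 hc,
      fun hc => (h ⟨c, ReflTransGen.head hc b.2⟩).2 hc⟩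

theorem reflTransGen_belowRoot {x : α} (a : Below r x) :
    ReflTransGen (belowRel r x) a (belowRoot r x) := by
  obtain ⟨a, ha⟩ := a
  induction ha using ReflTransGen.head_induction_on with
  | refl => exact ReflTransGen.refl
  | head hab hb ih =>
    have hab' : belowRel r x ⟨_, ReflTransGen.head hab hb⟩ ⟨_, hb⟩ := hab
    exact ReflTransGen.head hab' ih

theorem collapse_below (hr : WellFounded r) {x : α} (a : Below r x) :
    (wellFounded_belowRel hr x).collapse a = hr.collapse a.1 :=
  (congrFun ((wellFounded_belowRel hr x).collapse_comp_of_isSimulation hr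
    (isSimulation_below_val x)) a).symm

end Below

section CollapseQuotient

variable (hr : WellFounded r)

def collapseQuotRel :
    Quotient (Setoid.ker hr.collapse) → Quotient (Setoid.ker hr.collapse) → Prop :=
  InvImage (· ∈ ·) (Setoid.kerLift hr.collapse)

theorem wellFounded_collapseQuotRel : WellFounded (collapseQuotRel hr) :=
  InvImage.wf _ ZFSet.mem_wf

theorem collapse_collapseQuotRel :
    (wellFounded_collapseQuotRel hr).collapse = Setoid.kerLift hr.collapse := by
  refine (wellFounded_collapseQuotRel hr).collapse_eq_of_mem_iff fun q t => ⟨fun ht => ?_, ?_⟩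
  · induction q using Quotient.inductionOn with
    | h a =>
      obtain ⟨b, -, rfl⟩ := hr.mem_collapse.1 ht
      exact ⟨⟦b⟧, ht, rfl⟩
  · rintro ⟨p, hp, rfl⟩
    exact hp

theorem isExtRel_collapseQuotRel : IsExtRel (collapseQuotRel hr) :=
  (wellFounded_collapseQuotRel hr).injective_collapse_iff.1
    ((collapse_collapseQuotRel hr).symm ▸ Setoid.kerLift_injective _)

theorem reflTransGen_collapseQuotRel {x : α} (hx : ∀ a, ReflTransGen r a x)
    (q : Quotient (Setoid.ker hr.collapse)) : ReflTransGen (collapseQuotRel hr) q ⟦x⟧ := by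
  induction q using Quotient.inductionOn with
  | h a => exact (hx a).lift (Quotient.mk _) fun _ _ => hr.collapse_mem_collapse

end CollapseQuotient

namespace WEApg

theorem wellFounded (X : WEApg.{u}) : WellFounded X.rel :=
  isWFRel_iff_wellFounded.1 X.wf

noncomputable def collapse (X : WEApg.{u}) : ZFSet.{u} :=
  X.wellFounded.collapse X.root

theorem iso_iff_collapse_eq {W X : WEApg.{u}} : W.Iso X ↔ W.collapse = X.collapse :=
  pIso_iff_collapse_eq _ _ W.ext X.ext W.acc X.acc

theorem mem_iff_collapse_mem {W Z : WEApg.{u}} : W.Mem Z ↔ W.collapse ∈ Z.collapse := by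
  rw [collapse, Z.wellFounded.mem_collapse]
  refine exists_congr fun z => and_congr_right fun _ => ?_
  rw [pIso_iff_collapse_eq W.wellFounded (wellFounded_belowRel Z.wellFounded z) W.ext
    (isExtRel_belowRel Z.ext z) W.acc reflTransGen_belowRoot, collapse_below, eq_comm]
  rfl

noncomputable def ofWellFounded (hr : WellFounded r) (x : α) (hx : ∀ a, ReflTransGen r a x) :
    WEApg.{u} where
  carrier := Quotient (Setoid.ker hr.collapse)
  rel := collapseQuotRel hr
  root := ⟦x⟧
  acc := reflTransGen_collapseQuotRel hr hx
  wf := isWFRel_iff_wellFounded.2 (wellFounded_collapseQuotRel hr)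
  ext := isExtRel_collapseQuotRel hr

theorem collapse_ofWellFounded (hr : WellFounded r) (x : α) (hx : ∀ a, ReflTransGen r a x) :
    (ofWellFounded hr x hx).collapse = hr.collapse x :=
  congrFun (collapse_collapseQuotRel hr) ⟦x⟧

variable (X Y : WEApg.{u})

inductive PairRel : Option (X.carrier ⊕ Y.carrier) → Option (X.carrier ⊕ Y.carrier) → Prop
  | inl {a b : X.carrier} : X.rel a b → PairRel (some (.inl a)) (some (.inl b))
  | inr {a b : Y.carrier} : Y.rel a b → PairRel (some (.inr a)) (some (.inr b))
  | rootl : PairRel (some (.inl X.root)) none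
  | rootr : PairRel (some (.inr Y.root)) none

noncomputable def pairCollapse : Option (X.carrier ⊕ Y.carrier) → ZFSet.{u}
  | none => {X.collapse, Y.collapse}
  | some (.inl a) => X.wellFounded.collapse a
  | some (.inr b) => Y.wellFounded.collapse b

theorem mem_pairCollapse_iff (q : Option (X.carrier ⊕ Y.carrier)) (t : ZFSet.{u}) :
    t ∈ pairCollapse X Y q ↔ ∃ p, PairRel X Y p q ∧ pairCollapse X Y p = t := by
  constructor
  · intro ht
    match q with
    | none =>
      rcases ZFSet.mem_pair.1 ht with rfl | rfl
      exacts [⟨_, .rootl, rfl⟩, ⟨_, .rootr, rfl⟩]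
    | some (.inl b) =>
      obtain ⟨a, ha, rfl⟩ := X.wellFounded.mem_collapse.1 ht
      exact ⟨_, .inl ha, rfl⟩
    | some (.inr b) =>
      obtain ⟨a, ha, rfl⟩ := Y.wellFounded.mem_collapse.1 ht
      exact ⟨_, .inr ha, rfl⟩
  · rintro ⟨p, hp, rfl⟩
    cases hp with
    | inl h => exact X.wellFounded.collapse_mem_collapse h
    | inr h => exact Y.wellFounded.collapse_mem_collapse h
    | rootl => exact ZFSet.mem_pair.2 (.inl rfl)
    | rootr => exact ZFSet.mem_pair.2 (.inr rfl)

theorem wellFounded_pairRel : WellFounded (PairRel X Y) :=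
  Subrelation.wf (fun h => (mem_pairCollapse_iff X Y _ _).2 ⟨_, h, rfl⟩)
    (InvImage.wf (pairCollapse X Y) ZFSet.mem_wf)

theorem reflTransGen_pairRel_none (q : Option (X.carrier ⊕ Y.carrier)) :
    ReflTransGen (PairRel X Y) q none :=
  match q with
  | none => ReflTransGen.refl
  | some (.inl a) => ((X.acc a).lift (some ∘ Sum.inl) fun _ _ => PairRel.inl).tail PairRel.rootl
  | some (.inr b) => ((Y.acc b).lift (some ∘ Sum.inr) fun _ _ => PairRel.inr).tail PairRel.rootr

noncomputable def pair : WEApg.{u} :=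
  ofWellFounded (wellFounded_pairRel X Y) none (reflTransGen_pairRel_none X Y)

theorem collapse_pair : (pair X Y).collapse = {X.collapse, Y.collapse} := by
  rw [pair, collapse_ofWellFounded,
    WellFounded.collapse_eq_of_mem_iff _ (mem_pairCollapse_iff X Y)]
  rfl

end WEApg

/-- Pairing for well-founded extensional apgs. -/
theorem weapg_pairing (X Y : WEApg.{u}) :
    ∃ Z : WEApg.{u}, ∀ W : WEApg.{u},
      W.Mem Z ↔ (W.Iso X ∨ W.Iso Y) :=
  ⟨WEApg.pair X Y, fun W => by
    rw [WEApg.mem_iff_collapse_mem, WEApg.collapse_pair, ZFSet.mem_pair,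
      WEApg.iso_iff_collapse_eq, WEApg.iso_iff_collapse_eq]⟩
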